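/- arXiv:2010.04688 — 3 statements merged into one kernel-verified Lean document; each statement's English description precedes it below -/
import Mathlib

section
/- Let n ≥ 2 be a natural number. For each i ∈ {1,…,n} let G_i : ℝ^{n−1} → ℝ be measurable with ∫_{ℝ^{n−1}} |G_i|^{n−1} < ∞, and define F_i : ℝⁿ → ℝ by F_i(x) = G_i(x₁,…,x_{i−1},x_{i+1},…,x_n), so that F_i does not depend on the i-th coordinate. Then ∫_{ℝⁿ} |F_1(x) ⋯ F_n(x)| dx ≤ ∏_{i=1}^n ( ∫_{ℝ^{n−1}} |G_i|^{n−1} dV_i )^{1/(n−1)}. -/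
/-!
Writing `f i = |G i|^{n-1}` composed with the projection forgetting coordinate `i`, the integrand
is `∏ i, f i ^ (1/(n-1))`. Integrate out the coordinates one at a time: in direction `j` the
factor coming from `f j` is constant, and Hölder's inequality for the remaining `n - 1` factors,
each with exponent `1/(n-1)`, moves the integral inside every one of them. After all `n`
integrations the factor `i` has become the `(n-1)`-fold integral of `f i`, i.e. `∫ |G i|^{n-1}`.
-/

open MeasureTheory ENNReal Finset Function
open scoped NNReal

section LoomisWhitney

variable {ι : Type*} [DecidableEq ι] {A : ι → Type*} [∀ i, MeasurableSpace (A i)]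
  (μ : ∀ i, Measure (A i)) [∀ i, SigmaFinite (μ i)]

theorem lmarginal_update_of_update_eq {f : (∀ i, A i) → ℝ≥0∞} (hf : Measurable f) {i : ι}
    (hfi : ∀ x t, f (update x i t) = f x) (s : Finset ι) (x : ∀ i, A i) (t : A i) :
    (∫⋯∫⁻_s, f ∂μ) (update x i t) = (∫⋯∫⁻_s, f ∂μ) x := by
  by_cases hi : i ∈ s
  · exact lmarginal_update_of_mem μ hi f x t
  · rw [lmarginal_update_of_notMem hf hi]
    exact congrArg (fun g => (∫⋯∫⁻_s, g ∂μ) x) (funext fun y => hfi y t)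

variable [Fintype ι] {p : ℝ} {f : ι → (∀ i, A i) → ℝ≥0∞}

/-- The factor `j` is constant in the direction `j`, and Hölder's inequality with the `#ι - 1`
exponents `p` moves the integral inside the remaining factors. -/
theorem lmarginal_insert_prod_rpow_le (hp₀ : 0 ≤ p) (hp : (Fintype.card ι - 1 : ℝ) * p = 1)
    (hf : ∀ i, Measurable (f i)) (hfi : ∀ i x t, f i (update x i t) = f i x)
    (s : Finset ι) {j : ι} (hj : j ∉ s) (x : ∀ i, A i) :
    ∫⁻ t, ∏ i, (∫⋯∫⁻_(s.erase i), f i ∂μ) (update x j t) ^ p ∂μ j ≤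
      ∏ i, (∫⋯∫⁻_((insert j s).erase i), f i ∂μ) x ^ p := by
  have hmeas : ∀ i, Measurable fun t => (∫⋯∫⁻_(s.erase i), f i ∂μ) (update x j t) :=
    fun i => ((hf i).lmarginal μ).comp (measurable_update x)
  have hexp : ∑ _i ∈ univ.erase j, p = 1 := by
    rw [sum_const, card_erase_of_mem (mem_univ j), card_univ, nsmul_eq_mul,
      Nat.cast_pred (Fintype.card_pos_iff.mpr ⟨j⟩)]
    exact hp
  simp_rw [← mul_prod_erase univ _ (mem_univ j), erase_eq_of_notMem hj, erase_insert hj,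
    lmarginal_update_of_update_eq μ (hf j) (hfi j)]
  rw [lintegral_const_mul _ (measurable_prod _ fun i _ => (hmeas i).pow_const p)]
  gcongr
  calc ∫⁻ t, ∏ i ∈ univ.erase j, (∫⋯∫⁻_(s.erase i), f i ∂μ) (update x j t) ^ p ∂μ j
      ≤ ∏ i ∈ univ.erase j, (∫⁻ t, (∫⋯∫⁻_(s.erase i), f i ∂μ) (update x j t) ∂μ j) ^ p :=
        lintegral_prod_norm_pow_le _ (fun i _ => (hmeas i).aemeasurable) hexp fun _ _ => hp₀
    _ = ∏ i ∈ univ.erase j, (∫⋯∫⁻_((insert j s).erase i), f i ∂μ) x ^ p := by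
        refine prod_congr rfl fun i hi => ?_
        rw [erase_insert_of_ne (ne_of_mem_erase hi).symm,
          lmarginal_insert _ (hf i) (fun h => hj (mem_of_mem_erase h))]

theorem lmarginal_prod_rpow_le (hp₀ : 0 ≤ p) (hp : (Fintype.card ι - 1 : ℝ) * p = 1)
    (hf : ∀ i, Measurable (f i)) (hfi : ∀ i x t, f i (update x i t) = f i x)
    (s : Finset ι) :
    (∫⋯∫⁻_s, (fun x => ∏ i, f i x ^ p) ∂μ) ≤ fun x => ∏ i, (∫⋯∫⁻_(s.erase i), f i ∂μ) x ^ p := by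
  induction s using Finset.induction with
  | empty => simp
  | @insert j s hj ih =>
    intro x
    rw [lmarginal_insert _ (measurable_prod _ fun i _ => (hf i).pow_const p) hj]
    exact (lintegral_mono fun t => ih (update x j t)).trans
      (lmarginal_insert_prod_rpow_le μ hp₀ hp hf hfi s hj x)

/-- A form of the Loomis–Whitney inequality. -/
theorem lintegral_prod_rpow_le_prod_lmarginal (hp₀ : 0 ≤ p)
    (hp : (Fintype.card ι - 1 : ℝ) * p = 1)
    (hf : ∀ i, Measurable (f i)) (hfi : ∀ i x t, f i (update x i t) = f i x)
    (x : ∀ i, A i) :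
    ∫⁻ y, ∏ i, f i y ^ p ∂Measure.pi μ ≤ ∏ i, (∫⋯∫⁻_(univ.erase i), f i ∂μ) x ^ p := by
  rw [lintegral_eq_lmarginal_univ x]
  exact lmarginal_prod_rpow_le μ hp₀ hp hf hfi univ x

end LoomisWhitney

section SuccAboveCast

variable {m n : ℕ}

def succAboveCast (h : m + 1 = n) (i : Fin n) (j : Fin m) : Fin n :=
  Fin.cast h ((Fin.cast h.symm i).succAbove j)

theorem succAboveCast_ne (h : m + 1 = n) (i : Fin n) (j : Fin m) : succAboveCast h i j ≠ i := by
  subst h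
  exact Fin.succAbove_ne i j

theorem succAboveCast_injective (h : m + 1 = n) (i : Fin n) : Injective (succAboveCast h i) := by
  subst h
  exact Fin.succAbove_right_injective

theorem image_succAboveCast_univ (h : m + 1 = n) (i : Fin n) :
    univ.image (succAboveCast h i) = univ.erase i := by
  subst h
  ext k
  simp [succAboveCast, Fin.exists_succAbove_eq_iff]

theorem update_comp_succAboveCast {α : Type*} (h : m + 1 = n) (x : Fin n → α) (i : Fin n)
    (t : α) :
    update x i t ∘ succAboveCast h i = x ∘ succAboveCast h i := by
  ext j
  exact update_of_ne (succAboveCast_ne h i j) t x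

theorem lmarginal_erase_comp_succAboveCast {α : Type*} [MeasurableSpace α] (μ : Measure α)
    [SigmaFinite μ] (h : m + 1 = n) (i : Fin n) {g : (Fin m → α) → ℝ≥0∞} (hg : Measurable g)
    (x : Fin n → α) :
    (∫⋯∫⁻_(univ.erase i), (fun y => g (y ∘ succAboveCast h i)) ∂fun _ => μ) x =
      ∫⁻ y, g y ∂Measure.pi fun _ => μ := by
  rw [← image_succAboveCast_univ h i]
  exact (lmarginal_image (succAboveCast_injective h i) _ hg x).trans (congrFun lmarginal_univ _)

end SuccAboveCast

/-- Gagliardo product lemma, Lemma 4.3 of the paper.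
Let `n ≥ 2`. For each `i` let `G i : ℝ^{n-1} → ℝ` be measurable with
`∫ |G i|^{n-1} < ∞`, and let `F i : ℝⁿ → ℝ` be given by
`F i x = G i (x₁,…,x_{i-1},x_{i+1},…,x_n)` (so `F i` does not depend on the `i`-th
coordinate).  Then `∫_{ℝⁿ} |F 1 ⋯ F n| ≤ ∏ i (∫_{ℝ^{n-1}} |G i|^{n-1})^{1/(n-1)}`. -/
theorem stmt1 (n : ℕ) (hn : 2 ≤ n)
    (G : Fin n → (Fin (n - 1) → ℝ) → ℝ)
    (hGmeas : ∀ i, Measurable (G i)) :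
    (∫⁻ x : Fin n → ℝ, ∏ i : Fin n,
        (‖G i (fun j => x (Fin.cast (by omega : n - 1 + 1 = n)
          ((Fin.cast (by omega : n = n - 1 + 1) i).succAbove j)))‖₊ : ℝ≥0∞)) ≤
      ∏ i : Fin n,
        (∫⁻ y : Fin (n - 1) → ℝ, (‖G i y‖₊ : ℝ≥0∞) ^ (n - 1)) ^ ((1 : ℝ) / ((n : ℝ) - 1)) := by
  have hn₁ : n - 1 + 1 = n := by omega
  have hp : (1 : ℝ) / ((n : ℝ) - 1) = ((n - 1 : ℕ) : ℝ)⁻¹ := by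
    rw [one_div, Nat.cast_pred (by omega)]
  have hcard : (Fintype.card (Fin n) - 1 : ℝ) * ((n - 1 : ℕ) : ℝ)⁻¹ = 1 := by
    rw [Fintype.card_fin, ← Nat.cast_pred (by omega), mul_inv_cancel₀ (by norm_cast; omega)]
  have hg : ∀ i, Measurable fun y => (‖G i y‖₊ : ℝ≥0∞) ^ (n - 1) :=
    fun i => (hGmeas i).nnnorm.coe_nnreal_ennreal.pow_const _
  let f i (x : Fin n → ℝ) := (‖G i (x ∘ succAboveCast hn₁ i)‖₊ : ℝ≥0∞) ^ (n - 1)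
  have hf i : Measurable (f i) :=
    (hg i).comp (measurable_pi_lambda _ fun j => measurable_pi_apply _)
  have hfi i x t : f i (update x i t) = f i x := by simp only [f, update_comp_succAboveCast]
  calc _ = ∫⁻ x, ∏ i, f i x ^ ((n - 1 : ℕ) : ℝ)⁻¹ ∂Measure.pi fun _ => volume := by
        simp_rw [f, pow_rpow_inv_natCast (by omega : n - 1 ≠ 0), volume_pi]; rfl
    _ ≤ ∏ i, (∫⋯∫⁻_(univ.erase i), f i ∂fun _ => volume) 0 ^ ((n - 1 : ℕ) : ℝ)⁻¹ :=
        lintegral_prod_rpow_le_prod_lmarginal _ (by positivity) hcard hf hfi 0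
    _ = _ := by simp_rw [f, lmarginal_erase_comp_succAboveCast _ hn₁ _ (hg _), hp]; rfl
end

section
/- Let Ω ⊆ ℝ³ be a bounded open set, let a₁, a₂, a₃ : Ω → ℝ be continuously differentiable with bounded values and bounded first partial derivatives, and let s₀ ∈ ℝ. Set B₁ := sup_{i≠ℓ} sup_{x∈Ω} |a_i(x) ∂_i a_ℓ(x)| and B₂ := sup_{ℓ=1,2,3} sup_{x∈Ω} |aₗ(x)|. Then for all continuously differentiable u, v : Ω → ℍ with v square-integrable and the partial derivatives of u square-integrable on Ω, | ∫_Ω star( (Vu)(x) − 2s₀ (Tu)(x) ) · v(x) dx | ≤ ( 2B₁ + 2|s₀|B₂ ) · D₁(u) · ‖v‖_{L²(Ω)}. -/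
open MeasureTheory

noncomputable section

/-- `ℝ³`, modelled as `Fin 3 → ℝ`. -/
abbrev R3 := Fin 3 → ℝ

/-- Partial derivative in the `ℓ`-th coordinate direction of a quaternion-valued function. -/
def pdQ (ℓ : Fin 3) (u : R3 → Quaternion ℝ) (x : R3) : Quaternion ℝ :=
  fderiv ℝ u x (Pi.single ℓ 1)

/-- Partial derivative in the `ℓ`-th coordinate direction of a real-valued function. -/
def pdR (ℓ : Fin 3) (f : R3 → ℝ) (x : R3) : ℝ :=
  fderiv ℝ f x (Pi.single ℓ 1)

/-- The imaginary units `e₁, e₂, e₃` of the quaternions. -/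
def eQ : Fin 3 → Quaternion ℝ
  | 0 => ⟨0, 1, 0, 0⟩
  | 1 => ⟨0, 0, 1, 0⟩
  | 2 => ⟨0, 0, 0, 1⟩

/-- The vector operator `T u = Σₗ eₗ (aₗ ∂ₗ u)`. -/
def Tvec (a : Fin 3 → R3 → ℝ) (u : R3 → Quaternion ℝ) (x : R3) : Quaternion ℝ :=
  ∑ ℓ : Fin 3, eQ ℓ * (a ℓ x • pdQ ℓ u x)

/-- The first-order vector operator
`V u = e₁(a₃(∂₃a₂)∂₂u − a₂(∂₂a₃)∂₃u) + e₂(a₃(∂₃a₁)∂₁u − a₁(∂₁a₃)∂₃u)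
      + e₃(a₁(∂₁a₂)∂₂u − a₂(∂₂a₁)∂₁u)`
(indices shifted by one: `aᵢ = a (i-1)`, `eᵢ = eQ (i-1)`). -/
def Vop (a : Fin 3 → R3 → ℝ) (u : R3 → Quaternion ℝ) (x : R3) : Quaternion ℝ :=
  eQ 0 * ((a 2 x * pdR 2 (a 1) x) • pdQ 1 u x - (a 1 x * pdR 1 (a 2) x) • pdQ 2 u x)
  + eQ 1 * ((a 2 x * pdR 2 (a 0) x) • pdQ 0 u x - (a 0 x * pdR 0 (a 2) x) • pdQ 2 u x)
  + eQ 2 * ((a 0 x * pdR 0 (a 1) x) • pdQ 1 u x - (a 1 x * pdR 1 (a 0) x) • pdQ 0 u x)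

/-- The `L²(Ω)` norm `(∫_Ω |g|²)^{1/2}` of a quaternion-valued function. -/
def nL2 (Ω : Set R3) (g : R3 → Quaternion ℝ) : ℝ :=
  (∫ x in Ω, ‖g x‖ ^ 2) ^ ((1 : ℝ) / 2)

/-- `D₁(u) = Σₗ ‖∂ₗu‖_{L²(Ω)}`. -/
def D1 (Ω : Set R3) (u : R3 → Quaternion ℝ) : ℝ :=
  ∑ ℓ : Fin 3, nL2 Ω (pdQ ℓ u)

/-- The squared Dirichlet seminorm `‖u‖²_D = Σₗ ‖∂ₗu‖²_{L²(Ω)}`. -/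
def nD2 (Ω : Set R3) (u : R3 → Quaternion ℝ) : ℝ :=
  ∑ ℓ : Fin 3, ∫ x in Ω, ‖pdQ ℓ u x‖ ^ 2

/-- `M = Σ_{i,ℓ} ‖aᵢ ∂ᵢ aₗ‖_{L³(Ω)}`. -/
def Msum (Ω : Set R3) (a : Fin 3 → R3 → ℝ) : ℝ :=
  ∑ i : Fin 3, ∑ ℓ : Fin 3, (∫ x in Ω, |a i x * pdR i (a ℓ) x| ^ 3) ^ ((1 : ℝ) / 3)

/-- The real part `Re b_{js₁}(u,u)` of the quadratic form of Definition 3.2 of the paper,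
for a purely imaginary spectral parameter `s = j s₁`:
`ReB(u) = s₁²‖u‖²_{L²} + Σₗ‖aₗ∂ₗu‖²_{L²}
  + Re((1/2) Σₗ ∫_Ω star(∂ₗu) ∂ₗ(aₗ²) u + ∫_Ω star(Vu) u)`. -/
def ReB (Ω : Set R3) (a : Fin 3 → R3 → ℝ) (s₁ : ℝ) (u : R3 → Quaternion ℝ) : ℝ :=
  s₁ ^ 2 * (∫ x in Ω, ‖u x‖ ^ 2)
  + (∑ ℓ : Fin 3, ∫ x in Ω, ‖a ℓ x • pdQ ℓ u x‖ ^ 2)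
  + ((1 / 2 : ℝ) • (∑ ℓ : Fin 3,
        ∫ x in Ω, star (pdQ ℓ u x) * (pdR ℓ (fun y => a ℓ y ^ 2) x • u x))
      + ∫ x in Ω, star (Vop a u x) * u x).re

/-! Since the `eₗ` are unit quaternions and each `∂ₗu` occurs twice in `V`, pointwise on `Ω`
`|Vu − 2s₀Tu| ≤ (2B₁ + 2|s₀|B₂) Σₗ |∂ₗu|`; Cauchy–Schwarz in `L²(Ω)` for each `∂ₗu` against `v`
then gives the estimate. -/

lemma norm_eQ_mul (i : Fin 3) (q : Quaternion ℝ) : ‖eQ i * q‖ = ‖q‖ := by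
  have h : ‖eQ i‖ ^ 2 = 1 := by
    rw [sq, ← Quaternion.normSq_eq_norm_mul_self, Quaternion.normSq_def']
    fin_cases i <;> simp [eQ]
  rw [norm_mul, (pow_eq_one_iff_of_nonneg (norm_nonneg _) two_ne_zero).1 h, one_mul]

lemma norm_eQ_mul_sub_smul_le (i : Fin 3) (c d : ℝ) (p q : Quaternion ℝ) :
    ‖eQ i * (c • p - d • q)‖ ≤ |c| * ‖p‖ + |d| * ‖q‖ := by
  rw [norm_eQ_mul]
  refine (norm_sub_le _ _).trans ?_
  simp only [norm_smul, Real.norm_eq_abs, le_refl]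

section Pointwise

variable {a : Fin 3 → R3 → ℝ} {u : R3 → Quaternion ℝ} {x : R3}

lemma norm_Vop_le {B₁ : ℝ} (hB₁ : ∀ i ℓ : Fin 3, i ≠ ℓ → |a i x * pdR i (a ℓ) x| ≤ B₁) :
    ‖Vop a u x‖ ≤ 2 * B₁ * ∑ ℓ, ‖pdQ ℓ u x‖ := by
  have hterm : ∀ (k i j ℓ m : Fin 3), i ≠ j → ℓ ≠ m →
      ‖eQ k * ((a i x * pdR i (a j) x) • pdQ j u x - (a ℓ x * pdR ℓ (a m) x) • pdQ m u x)‖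
        ≤ B₁ * ‖pdQ j u x‖ + B₁ * ‖pdQ m u x‖ := fun k i j ℓ m hij hℓm =>
    (norm_eQ_mul_sub_smul_le _ _ _ _ _).trans <| add_le_add
      (mul_le_mul_of_nonneg_right (hB₁ i j hij) (norm_nonneg _))
      (mul_le_mul_of_nonneg_right (hB₁ ℓ m hℓm) (norm_nonneg _))
  calc ‖Vop a u x‖
      ≤ (B₁ * ‖pdQ 1 u x‖ + B₁ * ‖pdQ 2 u x‖) + (B₁ * ‖pdQ 0 u x‖ + B₁ * ‖pdQ 2 u x‖)
          + (B₁ * ‖pdQ 1 u x‖ + B₁ * ‖pdQ 0 u x‖) :=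
        norm_add₃_le.trans <| add_le_add (add_le_add
          (hterm _ _ _ _ _ (by decide) (by decide)) (hterm _ _ _ _ _ (by decide) (by decide)))
          (hterm _ _ _ _ _ (by decide) (by decide))
    _ = 2 * B₁ * ∑ ℓ, ‖pdQ ℓ u x‖ := by rw [Fin.sum_univ_three]; ring

lemma norm_Tvec_le {B₂ : ℝ} (hB₂ : ∀ ℓ : Fin 3, |a ℓ x| ≤ B₂) :
    ‖Tvec a u x‖ ≤ B₂ * ∑ ℓ, ‖pdQ ℓ u x‖ := by
  rw [Tvec, Finset.mul_sum]
  refine (norm_sum_le _ _).trans (Finset.sum_le_sum fun ℓ _ => ?_)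
  rw [norm_eQ_mul, norm_smul, Real.norm_eq_abs]
  exact mul_le_mul_of_nonneg_right (hB₂ ℓ) (norm_nonneg _)

lemma norm_Vop_sub_smul_Tvec_le {B₁ B₂ : ℝ} (s₀ : ℝ)
    (hB₁ : ∀ i ℓ : Fin 3, i ≠ ℓ → |a i x * pdR i (a ℓ) x| ≤ B₁)
    (hB₂ : ∀ ℓ : Fin 3, |a ℓ x| ≤ B₂) :
    ‖Vop a u x - (2 * s₀) • Tvec a u x‖ ≤ (2 * B₁ + 2 * |s₀| * B₂) * ∑ ℓ, ‖pdQ ℓ u x‖ :=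
  calc ‖Vop a u x - (2 * s₀) • Tvec a u x‖
      ≤ ‖Vop a u x‖ + |2 * s₀| * ‖Tvec a u x‖ := by
        rw [← Real.norm_eq_abs, ← norm_smul]; exact norm_sub_le _ _
    _ ≤ 2 * B₁ * ∑ ℓ, ‖pdQ ℓ u x‖ + |2 * s₀| * (B₂ * ∑ ℓ, ‖pdQ ℓ u x‖) :=
        add_le_add (norm_Vop_le hB₁) (mul_le_mul_of_nonneg_left (norm_Tvec_le hB₂) (abs_nonneg _))
    _ = (2 * B₁ + 2 * |s₀| * B₂) * ∑ ℓ, ‖pdQ ℓ u x‖ := by rw [abs_mul, abs_two]; ring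

end Pointwise

section Integral

variable {α : Type*} [MeasurableSpace α] {μ : Measure α}

lemma integral_norm_mul_norm_le_sqrt_mul_sqrt {E : Type*} [NormedAddCommGroup E] {f g : α → E}
    (hf : MemLp f 2 μ) (hg : MemLp g 2 μ) :
    ∫ x, ‖f x‖ * ‖g x‖ ∂μ ≤
      (∫ x, ‖f x‖ ^ 2 ∂μ) ^ ((1 : ℝ) / 2) * (∫ x, ‖g x‖ ^ 2 ∂μ) ^ ((1 : ℝ) / 2) := by
  have h2 : ENNReal.ofReal 2 = 2 := by norm_num
  simpa only [Real.rpow_two] using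
    integral_mul_norm_le_Lp_mul_Lq Real.HolderConjugate.two_two (h2 ▸ hf) (h2 ▸ hg)

lemma norm_integral_star_mul_le {ι : Type*} [Fintype ι] {F v : α → Quaternion ℝ}
    {g : ι → α → Quaternion ℝ} {C : ℝ} (hC : 0 ≤ C) (hv : MemLp v 2 μ)
    (hg : ∀ i, MemLp (g i) 2 μ) (hF : ∀ᵐ x ∂μ, ‖F x‖ ≤ C * ∑ i, ‖g i x‖) :
    ‖∫ x, star (F x) * v x ∂μ‖ ≤
      C * (∑ i, (∫ x, ‖g i x‖ ^ 2 ∂μ) ^ ((1 : ℝ) / 2)) * (∫ x, ‖v x‖ ^ 2 ∂μ) ^ ((1 : ℝ) / 2) := by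
  have hint : ∀ i, Integrable (fun x => ‖g i x‖ * ‖v x‖) μ := fun i =>
    (hg i).norm.integrable_mul hv.norm
  calc ‖∫ x, star (F x) * v x ∂μ‖
      ≤ ∫ x, ‖F x‖ * ‖v x‖ ∂μ := by
        simpa only [norm_mul, norm_star] using norm_integral_le_integral_norm (μ := μ) fun x => star (F x) * v x
    _ ≤ ∫ x, C * ∑ i, ‖g i x‖ * ‖v x‖ ∂μ := by
        refine integral_mono_of_nonneg (.of_forall fun x => by positivity)
          ((integrable_finsetSum _ fun i _ => hint i).const_mul C) ?_
        filter_upwards [hF] with x hx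
        rw [← Finset.sum_mul, ← mul_assoc]
        exact mul_le_mul_of_nonneg_right hx (norm_nonneg _)
    _ = C * ∑ i, ∫ x, ‖g i x‖ * ‖v x‖ ∂μ := by
        rw [integral_const_mul, integral_finsetSum _ fun i _ => hint i]
    _ ≤ C * ∑ i, (∫ x, ‖g i x‖ ^ 2 ∂μ) ^ ((1 : ℝ) / 2) * (∫ x, ‖v x‖ ^ 2 ∂μ) ^ ((1 : ℝ) / 2) :=
        mul_le_mul_of_nonneg_left (Finset.sum_le_sum fun i _ =>
          integral_norm_mul_norm_le_sqrt_mul_sqrt (hg i) hv) hC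
    _ = _ := by rw [← Finset.sum_mul, mul_assoc]

end Integral

theorem stmt7_general (Ω : Set R3) (hΩo : IsOpen Ω)
    (a : Fin 3 → R3 → ℝ)
    (s₀ : ℝ) (B₁ B₂ : ℝ)
    (hB₁ : ∀ i ℓ : Fin 3, i ≠ ℓ → ∀ x ∈ Ω, |a i x * pdR i (a ℓ) x| ≤ B₁)
    (hB₂ : ∀ ℓ : Fin 3, ∀ x ∈ Ω, |a ℓ x| ≤ B₂)
    (u v : R3 → Quaternion ℝ)
    (hv2 : MemLp v 2 (volume.restrict Ω))
    (hu2 : ∀ ℓ : Fin 3, MemLp (pdQ ℓ u) 2 (volume.restrict Ω)) :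
    ‖∫ x in Ω, star (Vop a u x - (2 * s₀) • Tvec a u x) * v x‖ ≤
      (2 * B₁ + 2 * |s₀| * B₂) * D1 Ω u * nL2 Ω v := by
  rcases Set.eq_empty_or_nonempty Ω with rfl | ⟨x₀, hx₀⟩
  · simp [D1, nL2]
  have hC : 0 ≤ 2 * B₁ + 2 * |s₀| * B₂ := by
    have := (abs_nonneg _).trans (hB₁ 0 1 (by decide) x₀ hx₀)
    have := (abs_nonneg _).trans (hB₂ 0 x₀ hx₀)
    positivity
  exact norm_integral_star_mul_le hC hv2 hu2 <| ae_restrict_of_forall_mem hΩo.measurableSet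
    fun x hx => norm_Vop_sub_smul_Tvec_le s₀ (fun i ℓ h => hB₁ i ℓ h x hx) (fun ℓ => hB₂ ℓ x hx)

/-- estimate (EQAZ2NEW) of Proposition 4.1 of the paper.
`|∫_Ω star(Vu − 2s₀Tu) v| ≤ (2B₁ + 2|s₀|B₂) D₁(u) ‖v‖_{L²(Ω)}` where
`B₁ = sup_{i≠ℓ} sup_Ω |aᵢ ∂ᵢaₗ|` and `B₂ = supₗ sup_Ω |aₗ|`. -/
theorem stmt7 (Ω : Set R3) (hΩo : IsOpen Ω) (hΩb : Bornology.IsBounded Ω)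
    (a : Fin 3 → R3 → ℝ) (ha : ∀ ℓ, ContDiffOn ℝ 1 (a ℓ) Ω)
    (s₀ : ℝ) (B₁ B₂ : ℝ)
    (hB₁ : ∀ i ℓ : Fin 3, i ≠ ℓ → ∀ x ∈ Ω, |a i x * pdR i (a ℓ) x| ≤ B₁)
    (hB₂ : ∀ ℓ : Fin 3, ∀ x ∈ Ω, |a ℓ x| ≤ B₂)
    (u v : R3 → Quaternion ℝ)
    (hu : ContDiffOn ℝ 1 u Ω) (hv : ContDiffOn ℝ 1 v Ω)
    (hv2 : MemLp v 2 (volume.restrict Ω))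
    (hu2 : ∀ ℓ : Fin 3, MemLp (pdQ ℓ u) 2 (volume.restrict Ω)) :
    ‖∫ x in Ω, star (Vop a u x - (2 * s₀) • Tvec a u x) * v x‖ ≤
      (2 * B₁ + 2 * |s₀| * B₂) * D1 Ω u * nL2 Ω v :=
  stmt7_general Ω hΩo a s₀ B₁ B₂ hB₁ hB₂ u v hv2 hu2
end
end

section
/- Let Ω ⊆ ℝ³ be an open set (possibly unbounded) and let a₁, a₂, a₃ : Ω → ℝ be continuously differentiable with M := Σ_{i,ℓ=1}³ ‖a_i ∂_i a_ℓ‖_{L³(Ω)} < ∞. Then for every continuously differentiable u : Ω → ℍ with compact support contained in Ω, | (1/2) Σ_{ℓ=1}³ ∫_Ω star(∂ₗu(x)) ∂ₗ(aₗ²)(x) u(x) dx + ∫_Ω star((Vu)(x)) u(x) dx | ≤ 4M · D₁(u)². -/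
open MeasureTheory

noncomputable section

open scoped ENNReal NNReal

/-!
Every integrand is bounded pointwise by `∑ i ℓ, |aᵢ ∂ᵢaₗ| |∂ₗu| |u|`: the diagonal terms come
from `½ ∂ₗ(aₗ²) = aₗ ∂ₗaₗ`, the six off-diagonal ones from `V`, the imaginary units having norm
one. Hölder's inequality with exponents `3, 2, 6` then bounds the left side by
`∑ i ℓ, ‖aᵢ ∂ᵢaₗ‖₃ ‖∂ₗu‖₂ ‖u‖₆`, and it remains to show `‖u‖₆ ≤ 4 ∑ ℓ, ‖∂ₗu‖₂`.
For this apply the Gagliardo–Nirenberg inequality `‖v‖_{3/2} ≤ ‖Dv‖₁` on `ℝ³` (constant `1`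
for the sup norm) to `v = |u|⁴`: since `|Dv| ≤ 4 |u|³ |Du|`, Cauchy–Schwarz gives
`‖u‖₆⁴ ≤ 4 ‖u‖₆³ ‖Du‖₂`, and `|Du| ≤ ∑ ℓ, |∂ₗu|`.
-/

theorem MeasureTheory.lintegral_enorm_mul_mul_le {α E F G : Type*} {m : MeasurableSpace α}
    {μ : Measure α} [NormedAddCommGroup E] [NormedAddCommGroup F] [NormedAddCommGroup G]
    {p q r s : ℝ≥0∞} [ENNReal.HolderTriple q r s] [ENNReal.HolderTriple p s 1]
    {f : α → E} {g : α → F} {h : α → G} (hf : AEStronglyMeasurable f μ)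
    (hg : AEStronglyMeasurable g μ) (hh : AEStronglyMeasurable h μ) :
    ∫⁻ x, ‖f x‖ₑ * ‖g x‖ₑ * ‖h x‖ₑ ∂μ ≤ eLpNorm f p μ * eLpNorm g q μ * eLpNorm h r μ := by
  have hgh : eLpNorm (fun x => ‖g x‖ * ‖h x‖) s μ ≤ eLpNorm g q μ * eLpNorm h r μ := by
    simpa using eLpNorm_le_eLpNorm_mul_eLpNorm'_of_norm hg hh (fun b c => ‖b‖ * ‖c‖) 1
      (.of_forall fun x => by simp)
  have hfgh := eLpNorm_le_eLpNorm_mul_eLpNorm'_of_norm (p := p) (q := s) (r := 1) hf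
    (hg.norm.mul hh.norm) (fun b c => ‖b‖ * c) 1 (.of_forall fun x => by simp)
  simp only [eLpNorm_one_eq_lintegral_enorm, ENNReal.coe_one, one_mul, Pi.mul_apply, enorm_mul,
    enorm_norm] at hfgh
  simp only [mul_assoc] at hfgh ⊢
  exact hfgh.trans (mul_le_mul_right hgh _)

instance ENNReal.holderTriple_two_six : ENNReal.HolderTriple 2 6 (3 / 2) := ⟨by
  rw [← ENNReal.toReal_eq_toReal_iff' (by simp) (by simp), ENNReal.toReal_add (by simp) (by simp)]
  simp [ENNReal.toReal_inv, ENNReal.toReal_div]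
  norm_num⟩

instance ENNReal.holderTriple_three_three_halves : ENNReal.HolderTriple 3 (3 / 2) 1 := ⟨by
  rw [← ENNReal.toReal_eq_toReal_iff' (by simp) (by simp), ENNReal.toReal_add (by simp) (by simp)]
  simp [ENNReal.toReal_inv, ENNReal.toReal_div]
  norm_num⟩

theorem MeasureTheory.sum_lintegral_le_lintegral_sum {α ι : Type*} {m : MeasurableSpace α}
    {μ : Measure α} (s : Finset ι) (f : ι → α → ℝ≥0∞) :
    ∑ i ∈ s, ∫⁻ x, f i x ∂μ ≤ ∫⁻ x, ∑ i ∈ s, f i x ∂μ := by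
  classical
  induction s using Finset.induction_on with
  | empty => simp
  | insert i s hi ih =>
    simp only [Finset.sum_insert hi]
    exact (add_le_add le_rfl ih).trans (le_lintegral_add _ _)

theorem MeasureTheory.eLpNorm_norm_pow {α F : Type*} {m : MeasurableSpace α}
    [NormedAddCommGroup F] (f : α → F) {n : ℕ} (hn : n ≠ 0) (p : ℝ≥0∞) (μ : Measure α) :
    eLpNorm (fun x => ‖f x‖ ^ n) p μ = eLpNorm f (p * n) μ ^ n := by
  simpa [Real.rpow_natCast] using eLpNorm_norm_rpow (p := p) (μ := μ) f (Nat.cast_pos.2 hn.bot_lt)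

theorem MeasureTheory.integral_norm_pow_rpow_eq_toReal_eLpNorm {α E : Type*}
    {m : MeasurableSpace α} {μ : Measure α} [NormedAddCommGroup E] {f : α → E}
    (hf : AEStronglyMeasurable f μ) {n : ℕ} (hn : n ≠ 0) :
    (∫ x, ‖f x‖ ^ n ∂μ) ^ ((1 : ℝ) / n) = (eLpNorm f n μ).toReal := by
  have := lpNorm_nnreal_eq_integral_norm_rpow (p := (n : ℝ≥0)) (by simpa using hn) hf
  rw [toReal_eLpNorm hf]
  simpa [Real.rpow_natCast] using this.symm

theorem ContinuousLinearMap.norm_le_sum_norm_apply_single {ι F : Type*} [Fintype ι]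
    [DecidableEq ι] [NormedAddCommGroup F] [NormedSpace ℝ F] (L : (ι → ℝ) →L[ℝ] F) :
    ‖L‖ ≤ ∑ i, ‖L (Pi.single i 1)‖ := by
  refine L.opNorm_le_bound (by positivity) fun y => ?_
  calc ‖L y‖ = ‖∑ i, y i • L (Pi.single i 1)‖ := by
        conv_lhs => rw [pi_eq_sum_univ' y]
        simp only [map_sum, map_smul]
    _ ≤ ∑ i, ‖L (Pi.single i 1)‖ * ‖y‖ := by
        refine (norm_sum_le _ _).trans (Finset.sum_le_sum fun i _ => ?_)
        rw [norm_smul, mul_comm]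
        gcongr
        exact norm_le_pi_norm y i
    _ = (∑ i, ‖L (Pi.single i 1)‖) * ‖y‖ := (Finset.sum_mul ..).symm

theorem eLpNorm_fderiv_le_sum_eLpNorm_fderiv_apply_single {ι F : Type*} [Fintype ι]
    [DecidableEq ι] [NormedAddCommGroup F] [NormedSpace ℝ F] {μ : Measure (ι → ℝ)}
    {u : (ι → ℝ) → F} (hu : ContDiff ℝ 1 u) {p : ℝ≥0∞} (hp : 1 ≤ p) :
    eLpNorm (fderiv ℝ u) p μ ≤ ∑ i, eLpNorm (fun x => fderiv ℝ u x (Pi.single i 1)) p μ := by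
  have hmeas : ∀ i, AEStronglyMeasurable (fun x => ‖fderiv ℝ u x (Pi.single i 1)‖) μ := fun i =>
    ((hu.continuous_fderiv one_ne_zero).clm_apply continuous_const).norm.aestronglyMeasurable
  calc eLpNorm (fderiv ℝ u) p μ
      ≤ eLpNorm (∑ i, fun x => ‖fderiv ℝ u x (Pi.single i 1)‖) p μ :=
        eLpNorm_mono_real fun x => by
          simpa using (fderiv ℝ u x).norm_le_sum_norm_apply_single
    _ ≤ ∑ i, eLpNorm (fun x => ‖fderiv ℝ u x (Pi.single i 1)‖) p μ :=
        eLpNorm_sum_le (fun i _ => hmeas i) hp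
    _ = ∑ i, eLpNorm (fun x => fderiv ℝ u x (Pi.single i 1)) p μ := by simp_rw [eLpNorm_norm]

theorem norm_fderiv_norm_pow_four_le {E F : Type*} [NormedAddCommGroup E] [NormedSpace ℝ E]
    [NormedAddCommGroup F] [InnerProductSpace ℝ F] {u : E → F} {x : E}
    (hu : DifferentiableAt ℝ u x) :
    ‖fderiv ℝ (fun y => ‖u y‖ ^ 4) x‖ ≤ 4 * ‖u x‖ ^ 3 * ‖fderiv ℝ u x‖ := by
  have hv := hu.hasFDerivAt.norm_sq.pow 2
  simp only [← pow_mul] at hv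
  rw [hv.fderiv]
  have hinner : ‖(innerSL ℝ (u x)).comp (fderiv ℝ u x)‖ ≤ ‖u x‖ * ‖fderiv ℝ u x‖ :=
    ((innerSL ℝ (u x)).opNorm_comp_le _).trans (by rw [innerSL_apply_norm])
  calc _ ≤ 2 * ‖u x‖ ^ 2 * (2 * ‖(innerSL ℝ (u x)).comp (fderiv ℝ u x)‖) := by
        simp [norm_smul, RCLike.norm_nsmul ℝ]
    _ ≤ 4 * ‖u x‖ ^ 3 * ‖fderiv ℝ u x‖ := by nlinarith [norm_nonneg (u x)]

theorem eLpNorm_le_eLpNorm_fderiv_one_pi {ι F : Type*} [Fintype ι] [NormedAddCommGroup F]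
    [NormedSpace ℝ F] {p : ℝ} (hp : Real.HolderConjugate (Fintype.card ι) p)
    {u : (ι → ℝ) → F} (hu : ContDiff ℝ 1 u) (h2u : HasCompactSupport u) :
    eLpNorm u (ENNReal.ofReal p) ≤ eLpNorm (fderiv ℝ u) 1 := by
  have hp0 : 0 < p := hp.symm.pos
  rw [eLpNorm_one_eq_lintegral_enorm, eLpNorm_eq_lintegral_rpow_enorm_toReal (by simpa using hp0)
    ENNReal.ofReal_ne_top, ENNReal.toReal_ofReal hp0.le, one_div]
  calc (∫⁻ x, ‖u x‖ₑ ^ p) ^ p⁻¹ ≤ ((∫⁻ x, ‖fderiv ℝ u x‖ₑ) ^ p) ^ p⁻¹ := by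
        gcongr
        exact lintegral_pow_le_pow_lintegral_fderiv_aux hp hu h2u
    _ = ∫⁻ x, ‖fderiv ℝ u x‖ₑ := ENNReal.rpow_rpow_inv hp0.ne' _

theorem eLpNorm_fderiv_norm_pow_four_le {ι F : Type*} [Fintype ι] [NormedAddCommGroup F]
    [InnerProductSpace ℝ F] {u : (ι → ℝ) → F} (hu : ContDiff ℝ 1 u) :
    eLpNorm (fderiv ℝ fun x => ‖u x‖ ^ 4) 1 ≤ 4 * eLpNorm u 6 ^ 3 * eLpNorm (fderiv ℝ u) 2 := by
  have hpointwise : eLpNorm (fderiv ℝ fun x => ‖u x‖ ^ 4) 1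
      ≤ eLpNorm (((4 : ℝ) • fun x => ‖u x‖ ^ 3) • fderiv ℝ u) 1 :=
    eLpNorm_mono fun x => by
      simpa [norm_smul, mul_assoc] using
        norm_fderiv_norm_pow_four_le (hu.differentiable one_ne_zero x)
  have hholder : eLpNorm (((4 : ℝ) • fun x => ‖u x‖ ^ 3) • fderiv ℝ u) 1
      ≤ eLpNorm ((4 : ℝ) • fun x => ‖u x‖ ^ 3) 2 * eLpNorm (fderiv ℝ u) 2 :=
    eLpNorm_smul_le_mul_eLpNorm (hu.continuous_fderiv one_ne_zero).aestronglyMeasurable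
      ((hu.continuous.norm.pow 3).const_smul (4 : ℝ)).aestronglyMeasurable
  have hcube : eLpNorm ((4 : ℝ) • fun x => ‖u x‖ ^ 3) 2 = 4 * eLpNorm u 6 ^ 3 := by
    rw [eLpNorm_const_smul, eLpNorm_norm_pow _ three_ne_zero, Real.enorm_eq_ofReal (by norm_num)]
    norm_num
  exact hcube ▸ hpointwise.trans hholder

theorem eLpNorm_six_le_four_mul_eLpNorm_fderiv {ι F : Type*} [Fintype ι]
    (hι : Fintype.card ι = 3) [NormedAddCommGroup F] [InnerProductSpace ℝ F]
    {u : (ι → ℝ) → F} (hu : ContDiff ℝ 1 u) (h2u : HasCompactSupport u) :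
    eLpNorm u 6 ≤ 4 * eLpNorm (fderiv ℝ u) 2 := by
  have hv : ContDiff ℝ 1 fun x => ‖u x‖ ^ 4 := by
    simpa [← pow_mul] using (hu.norm_sq ℝ).pow 2
  have hv2 : HasCompactSupport fun x => ‖u x‖ ^ 4 :=
    h2u.comp_left (g := fun z : F => ‖z‖ ^ 4) (by simp)
  have hconj : Real.HolderConjugate (Fintype.card ι) (3 / 2) := by
    rw [hι]
    constructor <;> norm_num
  have hv_eq : eLpNorm (fun x => ‖u x‖ ^ 4) (ENNReal.ofReal (3 / 2)) = eLpNorm u 6 ^ 4 := by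
    rw [eLpNorm_norm_pow _ four_ne_zero, ← ENNReal.ofReal_natCast,
      ← ENNReal.ofReal_mul (by norm_num)]
    norm_num
  have hcancel : eLpNorm u 6 ^ 3 * eLpNorm u 6 ≤ eLpNorm u 6 ^ 3 * (4 * eLpNorm (fderiv ℝ u) 2) := by
    rw [← pow_succ, ← hv_eq, ← mul_assoc, mul_comm _ 4]
    exact (eLpNorm_le_eLpNorm_fderiv_one_pi hconj hv hv2).trans
      (eLpNorm_fderiv_norm_pow_four_le hu)
  have hu6 : eLpNorm u 6 ≠ ∞ := (hu.continuous.memLp_of_hasCompactSupport h2u).eLpNorm_ne_top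
  rcases eq_or_ne (eLpNorm u 6) 0 with h0 | h0
  · rw [h0]
    exact zero_le
  exact (ENNReal.mul_le_mul_iff_right (pow_ne_zero 3 h0) (ENNReal.pow_ne_top hu6)).1 hcancel

theorem continuous_pdQ {u : R3 → Quaternion ℝ} (hu : ContDiff ℝ 1 u) (ℓ : Fin 3) :
    Continuous (pdQ ℓ u) :=
  (hu.continuous_fderiv one_ne_zero).clm_apply continuous_const

theorem eLpNorm_six_restrict_le_sum_pdQ {Ω : Set R3} {u : R3 → Quaternion ℝ} (hu : ContDiff ℝ 1 u)
    (husupp : HasCompactSupport u) (husub : tsupport u ⊆ Ω) :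
    eLpNorm u 6 (volume.restrict Ω) ≤ 4 * ∑ ℓ, eLpNorm (pdQ ℓ u) 2 (volume.restrict Ω) := by
  have hsupp : ∀ ℓ, Function.support (pdQ ℓ u) ⊆ Ω := fun ℓ =>
    (subset_tsupport _).trans ((tsupport_fderiv_apply_subset ℝ _).trans husub)
  have hglobal : eLpNorm u 6 ≤ 4 * ∑ ℓ, eLpNorm (pdQ ℓ u) 2 :=
    (eLpNorm_six_le_four_mul_eLpNorm_fderiv (Fintype.card_fin 3) hu husupp).trans
      (mul_le_mul_right (eLpNorm_fderiv_le_sum_eLpNorm_fderiv_apply_single hu one_le_two) 4)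
  simp_rw [eLpNorm_restrict_eq_of_support_subset (hsupp _)]
  exact (eLpNorm_mono_measure _ Measure.restrict_le_self).trans hglobal

theorem Msum_eq_sum_toReal_eLpNorm {Ω : Set R3} {a : Fin 3 → R3 → ℝ}
    (ha : ∀ i ℓ, AEStronglyMeasurable (fun x => a i x * pdR i (a ℓ) x) (volume.restrict Ω)) :
    Msum Ω a = ∑ i, ∑ ℓ,
      (eLpNorm (fun x => a i x * pdR i (a ℓ) x) 3 (volume.restrict Ω)).toReal := by
  simp_rw [Msum, ← Real.norm_eq_abs]
  exact Finset.sum_congr rfl fun i _ => Finset.sum_congr rfl fun ℓ _ => by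
    exact_mod_cast integral_norm_pow_rpow_eq_toReal_eLpNorm (ha i ℓ) three_ne_zero

theorem D1_eq_sum_toReal_eLpNorm {Ω : Set R3} {u : R3 → Quaternion ℝ}
    (hu : ∀ ℓ, AEStronglyMeasurable (pdQ ℓ u) (volume.restrict Ω)) :
    D1 Ω u = ∑ ℓ, (eLpNorm (pdQ ℓ u) 2 (volume.restrict Ω)).toReal :=
  Finset.sum_congr rfl fun ℓ _ => by
    exact_mod_cast integral_norm_pow_rpow_eq_toReal_eLpNorm (hu ℓ) two_ne_zero

theorem norm_eQ (k : Fin 3) : ‖eQ k‖ = 1 := by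
  have hsq : ‖eQ k‖ * ‖eQ k‖ = 1 := by
    rw [← Quaternion.normSq_eq_norm_mul_self]
    fin_cases k <;> rw [Quaternion.normSq_def'] <;> simp [eQ]
  nlinarith [norm_nonneg (eQ k)]

theorem enorm_star {E : Type*} [SeminormedAddCommGroup E] [StarAddMonoid E] [NormedStarGroup E]
    (x : E) : ‖star x‖ₑ = ‖x‖ₑ := by
  rw [← ofReal_norm, norm_star, ofReal_norm]

theorem pdR_sq {f : R3 → ℝ} {x : R3} (hf : DifferentiableAt ℝ f x) (ℓ : Fin 3) :
    pdR ℓ (fun y => f y ^ 2) x = 2 * f x * pdR ℓ f x := by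
  simp [pdR, (hf.hasFDerivAt.pow 2).fderiv, mul_assoc]

theorem enorm_Vop_le (a : Fin 3 → R3 → ℝ) (u : R3 → Quaternion ℝ) (x : R3) :
    ‖Vop a u x‖ₑ ≤
      ‖a 2 x * pdR 2 (a 1) x‖ₑ * ‖pdQ 1 u x‖ₑ + ‖a 1 x * pdR 1 (a 2) x‖ₑ * ‖pdQ 2 u x‖ₑ
      + (‖a 2 x * pdR 2 (a 0) x‖ₑ * ‖pdQ 0 u x‖ₑ + ‖a 0 x * pdR 0 (a 2) x‖ₑ * ‖pdQ 2 u x‖ₑ)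
      + (‖a 0 x * pdR 0 (a 1) x‖ₑ * ‖pdQ 1 u x‖ₑ + ‖a 1 x * pdR 1 (a 0) x‖ₑ * ‖pdQ 0 u x‖ₑ) := by
  unfold Vop
  refine (enorm_add_le _ _).trans (add_le_add ((enorm_add_le _ _).trans (add_le_add ?_ ?_)) ?_) <;>
  · rw [enorm_mul, ← ofReal_norm, norm_eQ, ENNReal.ofReal_one, one_mul, ← enorm_smul, ← enorm_smul]
    exact enorm_sub_le

theorem enorm_lowerOrderIntegrand_le {a : Fin 3 → R3 → ℝ} {u : R3 → Quaternion ℝ} {x : R3}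
    (ha : ∀ ℓ, DifferentiableAt ℝ (a ℓ) x) :
    ∑ ℓ : Fin 3, ‖(1 / 2 : ℝ) • (star (pdQ ℓ u x) * (pdR ℓ (fun y => a ℓ y ^ 2) x • u x))‖ₑ
        + ‖star (Vop a u x) * u x‖ₑ
      ≤ ∑ i : Fin 3, ∑ ℓ : Fin 3, ‖a i x * pdR i (a ℓ) x‖ₑ * ‖pdQ ℓ u x‖ₑ * ‖u x‖ₑ := by
  have hdiag : ∀ ℓ, ‖(1 / 2 : ℝ) • (star (pdQ ℓ u x) * (pdR ℓ (fun y => a ℓ y ^ 2) x • u x))‖ₑ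
      = ‖a ℓ x * pdR ℓ (a ℓ) x‖ₑ * ‖pdQ ℓ u x‖ₑ * ‖u x‖ₑ := by
    intro ℓ
    rw [pdR_sq (ha ℓ), mul_smul_comm, smul_smul,
      show (1 / 2 : ℝ) * (2 * a ℓ x * pdR ℓ (a ℓ) x) = a ℓ x * pdR ℓ (a ℓ) x by ring,
      enorm_smul, enorm_mul (star _), enorm_star, mul_assoc]
  rw [enorm_mul (star _), enorm_star]
  simp only [hdiag, Fin.sum_univ_three]
  refine (add_le_add le_rfl (mul_le_mul_left (enorm_Vop_le a u x) _)).trans_eq ?_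
  ring

theorem enorm_lowerOrder_le {Ω : Set R3} (hΩ : MeasurableSet Ω) {a : Fin 3 → R3 → ℝ}
    (ha : ∀ x ∈ Ω, ∀ ℓ, DifferentiableAt ℝ (a ℓ) x)
    (hc : ∀ i ℓ, AEStronglyMeasurable (fun x => a i x * pdR i (a ℓ) x) (volume.restrict Ω))
    {u : R3 → Quaternion ℝ} (hu : ContDiff ℝ 1 u) :
    ‖((1 / 2 : ℝ) • ∑ ℓ : Fin 3,
          ∫ x in Ω, star (pdQ ℓ u x) * (pdR ℓ (fun y => a ℓ y ^ 2) x • u x))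
        + ∫ x in Ω, star (Vop a u x) * u x‖ₑ ≤
      ∑ i, ∑ ℓ, eLpNorm (fun x => a i x * pdR i (a ℓ) x) 3 (volume.restrict Ω)
        * eLpNorm (pdQ ℓ u) 2 (volume.restrict Ω) * eLpNorm u 6 (volume.restrict Ω) := by
  have hpdQ : ∀ ℓ, AEStronglyMeasurable (pdQ ℓ u) (volume.restrict Ω) := fun ℓ =>
    (continuous_pdQ hu ℓ).aestronglyMeasurable
  have hmeas : ∀ i ℓ, AEMeasurable
      (fun x => ‖a i x * pdR i (a ℓ) x‖ₑ * ‖pdQ ℓ u x‖ₑ * ‖u x‖ₑ) (volume.restrict Ω) :=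
    fun i ℓ => ((hc i ℓ).enorm.mul (hpdQ ℓ).enorm).mul hu.continuous.aestronglyMeasurable.enorm
  calc _ ≤ (∑ ℓ : Fin 3, ∫⁻ x in Ω,
          ‖(1 / 2 : ℝ) • (star (pdQ ℓ u x) * (pdR ℓ (fun y => a ℓ y ^ 2) x • u x))‖ₑ)
        + ∫⁻ x in Ω, ‖star (Vop a u x) * u x‖ₑ := by
        refine (enorm_add_le _ _).trans (add_le_add ?_ (enorm_integral_le_lintegral_enorm _))
        rw [Finset.smul_sum]
        refine (enorm_sum_le _ _).trans (Finset.sum_le_sum fun ℓ _ => ?_)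
        rw [← integral_smul]
        exact enorm_integral_le_lintegral_enorm _
    _ ≤ ∫⁻ x in Ω, (∑ ℓ : Fin 3,
          ‖(1 / 2 : ℝ) • (star (pdQ ℓ u x) * (pdR ℓ (fun y => a ℓ y ^ 2) x • u x))‖ₑ
        + ‖star (Vop a u x) * u x‖ₑ) :=
        (add_le_add (sum_lintegral_le_lintegral_sum _ _) le_rfl).trans (le_lintegral_add _ _)
    _ ≤ ∫⁻ x in Ω, ∑ i, ∑ ℓ, ‖a i x * pdR i (a ℓ) x‖ₑ * ‖pdQ ℓ u x‖ₑ * ‖u x‖ₑ :=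
        setLIntegral_mono' hΩ fun x hx => enorm_lowerOrderIntegrand_le (ha x hx)
    _ = ∑ i, ∑ ℓ, ∫⁻ x in Ω, ‖a i x * pdR i (a ℓ) x‖ₑ * ‖pdQ ℓ u x‖ₑ * ‖u x‖ₑ := by
        rw [lintegral_finsetSum' _ fun i _ => Finset.aemeasurable_fun_sum _ fun ℓ _ => hmeas i ℓ]
        exact Finset.sum_congr rfl fun i _ => lintegral_finsetSum' _ fun ℓ _ => hmeas i ℓ
    _ ≤ _ := by
        gcongr with i _ ℓ _
        exact lintegral_enorm_mul_mul_le (s := 3 / 2) (hc i ℓ) (hpdQ ℓ)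
          hu.continuous.aestronglyMeasurable

theorem enorm_lowerOrder_le_four_mul {Ω : Set R3} (hΩ : MeasurableSet Ω)
    {a : Fin 3 → R3 → ℝ} (ha : ∀ x ∈ Ω, ∀ ℓ, DifferentiableAt ℝ (a ℓ) x)
    (hc : ∀ i ℓ, AEStronglyMeasurable (fun x => a i x * pdR i (a ℓ) x) (volume.restrict Ω))
    {u : R3 → Quaternion ℝ} (hu : ContDiff ℝ 1 u) (husupp : HasCompactSupport u)
    (husub : tsupport u ⊆ Ω) :
    ‖((1 / 2 : ℝ) • ∑ ℓ : Fin 3,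
          ∫ x in Ω, star (pdQ ℓ u x) * (pdR ℓ (fun y => a ℓ y ^ 2) x • u x))
        + ∫ x in Ω, star (Vop a u x) * u x‖ₑ ≤
      4 * (∑ i, ∑ ℓ, eLpNorm (fun x => a i x * pdR i (a ℓ) x) 3 (volume.restrict Ω))
        * (∑ ℓ, eLpNorm (pdQ ℓ u) 2 (volume.restrict Ω)) ^ 2 := by
  set C := fun i ℓ => eLpNorm (fun x => a i x * pdR i (a ℓ) x) 3 (volume.restrict Ω)
  set P := fun ℓ => eLpNorm (pdQ ℓ u) 2 (volume.restrict Ω)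
  calc _ ≤ ∑ i, ∑ ℓ, C i ℓ * P ℓ * eLpNorm u 6 (volume.restrict Ω) :=
        enorm_lowerOrder_le hΩ ha hc hu
    _ ≤ ∑ i, ∑ ℓ, C i ℓ * (∑ k, P k) * (4 * ∑ k, P k) := by
        gcongr with i _ ℓ _
        · exact Finset.single_le_sum (fun k _ => zero_le) (Finset.mem_univ ℓ)
        · exact eLpNorm_six_restrict_le_sum_pdQ hu husupp husub
    _ = 4 * (∑ i, ∑ ℓ, C i ℓ) * (∑ ℓ, P ℓ) ^ 2 := by
        simp only [← Finset.sum_mul]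
        ring

/-- the key estimate (e2) in the proof of Theorem 4.6 of the paper.
For `u` continuously differentiable with compact support contained in `Ω`,
`|(1/2) Σₗ ∫_Ω star(∂ₗu) ∂ₗ(aₗ²) u + ∫_Ω star(Vu) u| ≤ 4 M D₁(u)²` where
`M = Σ_{i,ℓ} ‖aᵢ∂ᵢaₗ‖_{L³(Ω)} < ∞`. -/
theorem stmt8 (Ω : Set R3) (hΩo : IsOpen Ω)
    (a : Fin 3 → R3 → ℝ) (ha : ∀ ℓ, ContDiffOn ℝ 1 (a ℓ) Ω)
    (hM : ∀ i ℓ : Fin 3,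
      MemLp (fun x => a i x * pdR i (a ℓ) x) 3 (volume.restrict Ω))
    (u : R3 → Quaternion ℝ) (hu : ContDiff ℝ 1 u)
    (husupp : HasCompactSupport u) (husub : tsupport u ⊆ Ω) :
    ‖((1 / 2 : ℝ) • ∑ ℓ : Fin 3,
          ∫ x in Ω, star (pdQ ℓ u x) * (pdR ℓ (fun y => a ℓ y ^ 2) x • u x))
        + ∫ x in Ω, star (Vop a u x) * u x‖ ≤
      4 * Msum Ω a * (D1 Ω u) ^ 2 := by
  have hdiff : ∀ x ∈ Ω, ∀ ℓ, DifferentiableAt ℝ (a ℓ) x := fun x hx ℓ =>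
    ((ha ℓ).contDiffAt (hΩo.mem_nhds hx)).differentiableAt one_ne_zero
  have hP : ∀ ℓ, MemLp (pdQ ℓ u) 2 (volume.restrict Ω) := fun ℓ =>
    (continuous_pdQ hu ℓ).memLp_of_hasCompactSupport (husupp.fderiv_apply (𝕜 := ℝ) _)
  have hCfin := fun i ℓ => (hM i ℓ).eLpNorm_ne_top
  have hPfin := fun ℓ => (hP ℓ).eLpNorm_ne_top
  have hfin : 4 * (∑ i, ∑ ℓ, eLpNorm (fun x => a i x * pdR i (a ℓ) x) 3 (volume.restrict Ω))
      * (∑ ℓ, eLpNorm (pdQ ℓ u) 2 (volume.restrict Ω)) ^ 2 ≠ ∞ :=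
    ENNReal.mul_ne_top (ENNReal.mul_ne_top ENNReal.ofNat_ne_top
      (ENNReal.sum_ne_top.2 fun i _ => ENNReal.sum_ne_top.2 fun ℓ _ => hCfin i ℓ))
      (ENNReal.pow_ne_top (ENNReal.sum_ne_top.2 fun ℓ _ => hPfin ℓ))
  rw [Msum_eq_sum_toReal_eLpNorm fun i ℓ => (hM i ℓ).1,
    D1_eq_sum_toReal_eLpNorm fun ℓ => (hP ℓ).1, ← toReal_enorm]
  refine (ENNReal.toReal_mono hfin ?_).trans_eq (by simp [ENNReal.toReal_sum, hCfin, hPfin])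
  exact enorm_lowerOrder_le_four_mul hΩo.measurableSet hdiff (fun i ℓ => (hM i ℓ).1) hu husupp
    husub
end
end
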